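/- arXiv:1804.02116 — 2 statements merged into one kernel-verified Lean document; each statement's English description precedes it below -/
import Mathlib

section
/- Let A be a finite rank torsion-free module over a Dedekind domain with a direct decomposition A = B ⊕ C where B has rank 1 and there is a monomorphism B → ⟨a⟩_* for every nonzero a ∈ A. Then every pure submodule K of A is A-generated. -/
open TensorProduct

/-- The pure submodule of `A` generated by `a`:
`⟨a⟩_* = {x ∈ A : r • x ∈ R a for some nonzero r ∈ R}`. -/
def pureGen (R : Type*) {A : Type*} [CommRing R] [IsDomain R] [AddCommGroup A]
    [Module R A] (a : A) : Submodule R A where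
  carrier := {x | ∃ r : R, r ≠ 0 ∧ ∃ s : R, r • x = s • a}
  zero_mem' := ⟨1, one_ne_zero, 0, by simp⟩
  add_mem' := by
    rintro x y ⟨r, hr, s, hx⟩ ⟨r', hr', s', hy⟩
    refine ⟨r * r', mul_ne_zero hr hr', r' * s + r * s', ?_⟩
    rw [smul_add, add_smul, mul_smul, mul_smul, mul_smul, smul_comm r r' x, hx, hy,
      smul_comm r' s a, smul_comm r s' a, smul_smul, smul_smul, mul_comm s' r]
  smul_mem' := by
    rintro c x ⟨r, hr, s, hx⟩
    exact ⟨r, hr, c * s, by rw [smul_comm, hx, mul_smul]⟩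
universe u

/-- A submodule `K ≤ A` is pure iff `A ⧸ K` is torsion-free, i.e.
`r • x ∈ K` with `r ≠ 0` implies `x ∈ K`. -/
def IsPureSubmodule (R : Type*) {A : Type*} [CommRing R] [AddCommGroup A]
    [Module R A] (K : Submodule R A) : Prop :=
  ∀ (r : R) (x : A), r ≠ 0 → r • x ∈ K → x ∈ K

/-- `K` is `A`-generated: some direct sum of copies of `A` surjects onto `K`. -/
def ModGenerated (R : Type*) {A : Type u} [CommRing R] [AddCommGroup A]
    [Module R A] (K : Submodule R A) : Prop :=
  ∃ (ι : Type u) (f : (ι →₀ A) →ₗ[R] K), Function.Surjective f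

/-- `A` is a self-pure-generator: every pure submodule of `A` is `A`-generated. -/
def SelfPureGenerator (R : Type*) (A : Type u) [CommRing R] [AddCommGroup A]
    [Module R A] : Prop :=
  ∀ K : Submodule R A, IsPureSubmodule R K → ModGenerated R K

/-!
Fix a nonzero `k ∈ K` and let `X = ⟨k⟩_*`, which lies in `K` by purity. Since `B` is a summand
of `A`, every map `B → X` extends to a map `A → K`, so it suffices that `X` is `B`-generated.
Embedding `B` and `X` into the fraction field `Q` of `R` as submodules `B', X'` containing `1`,
the maps `B → X` become multiplications by the elements of the colon `X' / B'`, and one has to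
show `1 ∈ (X' / B') B'`. This is local: at a height-one prime `v`, either `q₀ B'` (for the
multiplier `q₀ ≠ 0` given by the embedding `B → X`) already contains an element that is not
`v`-integral, or the `v`-adic valuation is bounded on `q₀ B'` and attains its maximum; then
multiplying `q₀` by an element with the opposite valuation at `v` that is integral at all other
primes gives a multiplier `q` such that `q B'` contains an element of valuation `1` at `v`. Either
way `(X' / B') B'` contains an element of `R ∖ v`, so its intersection with `R` is the unit ideal.
-/

namespace WithZero

theorem exists_max_image_of_le_one {α : Type*} (f : α → ℤᵐ⁰) {s : Set α}
    (hs : s.Nonempty) (h : ∀ a ∈ s, f a ≤ 1) : ∃ a₁ ∈ s, ∀ a ∈ s, f a ≤ f a₁ := by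
  by_cases h0 : ∀ a ∈ s, f a = 0
  · obtain ⟨a₁, ha₁⟩ := hs
    exact ⟨a₁, ha₁, fun a ha => by rw [h0 a ha]; exact zero_le⟩
  push Not at h0
  obtain ⟨a₀, ha₀, hfa₀⟩ := h0
  have hbdd : ∃ b : ℤ, ∀ k ∈ {k : ℤ | ∃ a ∈ s, f a = exp k}, k ≤ b := by
    refine ⟨0, fun k ⟨a, ha, hk⟩ => ?_⟩
    have := h a ha
    rwa [hk, ← exp_zero, exp_le_exp] at this
  obtain ⟨k₁, ⟨a₁, ha₁, hk₁⟩, hmax⟩ :=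
    Int.exists_greatest_of_bdd hbdd ⟨log (f a₀), a₀, ha₀, (exp_log hfa₀).symm⟩
  refine ⟨a₁, ha₁, fun a ha => ?_⟩
  by_cases hfa : f a = 0
  · rw [hfa]; exact zero_le
  rw [hk₁, ← exp_log hfa, exp_le_exp]
  exact hmax _ ⟨a, ha, (exp_log hfa).symm⟩

end WithZero

theorem Ideal.eq_top_of_forall_not_le_asIdeal {R : Type*} [CommRing R] [IsDedekindDomain R]
    {I : Ideal R} (hI : I ≠ ⊥)
    (h : ∀ v : IsDedekindDomain.HeightOneSpectrum R, ¬ I ≤ v.asIdeal) : I = ⊤ := by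
  by_contra hItop
  obtain ⟨P, hP, hIP⟩ := Ideal.exists_le_maximal I hItop
  exact h ⟨P, hP.isPrime, fun hP0 => hI (le_bot_iff.mp (hP0 ▸ hIP))⟩ hIP

namespace IsDedekindDomain

open WithZero

variable {R K : Type*} [CommRing R] [IsDedekindDomain R] [Field K] [Algebra R K]
  [IsFractionRing R K]

theorem mem_of_forall_exists_algebraMap_mul_mem {N : Submodule R K} (hN : N ≠ ⊥) {z : K}
    (h : ∀ v : HeightOneSpectrum R, ∃ s ∉ v.asIdeal, algebraMap R K s * z ∈ N) : z ∈ N := by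
  let I : Ideal R := N.comap (LinearMap.toSpanSingleton R K z)
  have hI : I ≠ ⊥ := by
    obtain ⟨y, hyN, hy0⟩ := Submodule.exists_mem_ne_zero_of_ne_bot hN
    obtain ⟨⟨a, d⟩, hz⟩ := IsLocalization.surj (nonZeroDivisors R) z
    obtain ⟨⟨a', d'⟩, hy⟩ := IsLocalization.surj (nonZeroDivisors R) y
    have ha' : a' ≠ 0 := by
      rintro rfl
      rw [map_zero, mul_eq_zero] at hy
      exact hy.elim hy0 (IsFractionRing.to_map_ne_zero_of_mem_nonZeroDivisors d'.2)
    refine (Submodule.ne_bot_iff _).mpr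
      ⟨d * a', ?_, mul_ne_zero (nonZeroDivisors.coe_ne_zero d) ha'⟩
    have : (d * a') • z = (a * d') • y := by
      simp only [Algebra.smul_def, map_mul] at hz hy ⊢
      rw [← hy, ← hz]
      ring
    simpa [I, this] using N.smul_mem _ hyN
  have hItop : I = ⊤ := Ideal.eq_top_of_forall_not_le_asIdeal hI fun v hIv => by
    obtain ⟨s, hsv, hs⟩ := h v
    exact hsv (hIv (by simpa [I, Algebra.smul_def] using hs))
  simpa [I] using (hItop ▸ Submodule.mem_top : (1 : R) ∈ I)

namespace HeightOneSpectrum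

variable (v : HeightOneSpectrum R)

theorem exists_algebraMap_mul_mem_of_valuation_le_one {N : Submodule R K} {z t : K}
    (hz : z ∈ N) (ht : v.valuation K t ≤ 1) :
    ∃ s ∉ v.asIdeal, algebraMap R K s * (t * z) ∈ N := by
  obtain ⟨n, ⟨s, hs⟩, hts⟩ := v.exists_primeCompl_mul_eq_of_integer t ht
  refine ⟨s, hs, ?_⟩
  rw [← mul_assoc, mul_comm _ t, hts, ← Algebra.smul_def]
  exact N.smul_mem n hz

theorem exists_algebraMap_mem_of_one_le_valuation {N : Submodule R K} {y : K}
    (hy : y ∈ N) (h : 1 ≤ v.valuation K y) :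
    ∃ s ∉ v.asIdeal, algebraMap R K s ∈ N := by
  have hy0 : y ≠ 0 := by rintro rfl; simp at h
  have hinv : v.valuation K y⁻¹ ≤ 1 := by rw [map_inv₀]; exact inv_le_one_of_one_le₀ h
  simpa [inv_mul_cancel₀ hy0] using v.exists_algebraMap_mul_mem_of_valuation_le_one hy hinv

variable (K) in
theorem exists_valuation_eq_exp_one :
    ∃ t : K, v.valuation K t = exp 1 ∧ ∀ w ≠ v, w.valuation K t ≤ 1 := by
  -- Write `(π) = v J` with `J ⊄ v` and take `t = c / π` for `c ∈ J ∖ v`: since `c v ⊆ (π)`,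
  -- `t` has a pole at no prime other than `v`.
  obtain ⟨π, hπ⟩ := v.intValuation_exists_uniformizer
  have hπv : π ∈ v.asIdeal := by
    rw [← intValuation_lt_one_iff_mem, hπ]; decide
  obtain ⟨J, hJ⟩ : v.asIdeal ∣ Ideal.span {π} :=
    Ideal.dvd_iff_le.mpr ((Ideal.span_singleton_le_iff_mem _).mpr hπv)
  obtain ⟨c, hcJ, hcv⟩ : ∃ c ∈ J, c ∉ v.asIdeal := by
    refine SetLike.not_le_iff_exists.mp fun hJv => ?_
    have : π ∈ v.asIdeal ^ 2 := by
      rw [pow_two, ← Ideal.span_singleton_le_iff_mem, hJ]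
      exact Ideal.mul_mono_right hJv
    rw [← intValuation_le_pow_iff_mem, hπ] at this
    exact absurd this (by decide)
  have hπ0 : algebraMap R K π ≠ 0 := by
    rw [Ne, IsFractionRing.to_map_eq_zero_iff]
    rintro rfl
    exact exp_ne_zero (hπ.symm.trans (map_zero _))
  refine ⟨algebraMap R K c / algebraMap R K π, ?_, fun w hw => ?_⟩
  · rw [map_div₀, valuation_of_algebraMap, valuation_of_algebraMap, hπ,
      intValuation_eq_one_iff.mpr hcv, one_div, ← exp_neg, neg_neg]
  obtain ⟨p, hpv, hpw⟩ : ∃ p ∈ v.asIdeal, p ∉ w.asIdeal := by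
    refine SetLike.not_le_iff_exists.mp fun hvw => hw ?_
    exact (HeightOneSpectrum.ext (v.isMaximal.eq_of_le w.isPrime.ne_top hvw)).symm
  obtain ⟨r, hr⟩ : π ∣ c * p := by
    rw [← Ideal.mem_span_singleton, hJ, mul_comm c p]
    exact Ideal.mul_mem_mul hpv hcJ
  have hpr : algebraMap R K c / algebraMap R K π * algebraMap R K p = algebraMap R K r := by
    rw [div_mul_eq_mul_div, div_eq_iff hπ0, ← map_mul, ← map_mul, hr, mul_comm]
  have := congrArg (w.valuation K) hpr
  rw [map_mul, valuation_of_algebraMap w p, intValuation_eq_one_iff.mpr hpw, mul_one] at this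
  exact this ▸ w.valuation_le_one r

variable (K) in
theorem exists_valuation_mul_eq_one {γ : ℤᵐ⁰} (hγ0 : γ ≠ 0) (hγ1 : γ ≤ 1) :
    ∃ t : K, v.valuation K t * γ = 1 ∧ ∀ w ≠ v, w.valuation K t ≤ 1 := by
  obtain ⟨k, rfl⟩ : ∃ k, γ = exp k := ⟨log γ, (exp_log hγ0).symm⟩
  rw [← exp_zero, exp_le_exp] at hγ1
  obtain ⟨t, ht, hw⟩ := v.exists_valuation_eq_exp_one K
  refine ⟨t ^ (-k).toNat, ?_, fun w hwv => ?_⟩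
  · rw [map_pow, ht, ← exp_nsmul, ← exp_add, exp_eq_one, nsmul_eq_mul, mul_one]
    omega
  · rw [map_pow]
    exact pow_le_one' (hw w hwv) _

theorem exists_algebraMap_mem_div_mul {B X : Submodule R K} (hB : 1 ∈ B) (hX : 1 ∈ X)
    {q₀ : K} (hq₀ : q₀ ∈ X / B) (hq₀0 : q₀ ≠ 0) :
    ∃ s ∉ v.asIdeal, algebraMap R K s ∈ X / B * B := by
  by_cases hbig : ∃ b ∈ B, 1 < v.valuation K (q₀ * b)
  · obtain ⟨b, hb, h1⟩ := hbig
    exact v.exists_algebraMap_mem_of_one_le_valuation (Submodule.mul_mem_mul hq₀ hb) h1.le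
  push Not at hbig
  obtain ⟨b₁, hb₁, hmax⟩ :=
    WithZero.exists_max_image_of_le_one (fun b => v.valuation K (q₀ * b)) ⟨1, hB⟩ hbig
  have hγ0 : v.valuation K (q₀ * b₁) ≠ 0 := by
    refine (zero_lt_iff.mpr ?_ |>.trans_le (hmax 1 hB)).ne'
    simpa using hq₀0
  obtain ⟨t, ht, hto⟩ := v.exists_valuation_mul_eq_one K hγ0 (hbig b₁ hb₁)
  have hq : t * q₀ ∈ X / B := by
    rw [Submodule.mem_div_iff_forall_mul_mem]
    intro b hb
    have hX0 : X ≠ ⊥ := (Submodule.ne_bot_iff _).mpr ⟨1, hX, one_ne_zero⟩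
    refine mem_of_forall_exists_algebraMap_mul_mem hX0 fun w => ?_
    rw [mul_assoc]
    by_cases hw : w = v
    · subst hw
      have hle : w.valuation K (t * (q₀ * b)) ≤ 1 := by
        rw [map_mul, ← ht]
        gcongr
        exact hmax b hb
      simpa using w.exists_algebraMap_mul_mem_of_valuation_le_one hX hle
    · exact w.exists_algebraMap_mul_mem_of_valuation_le_one (hq₀ b hb) (hto w hw)
  refine v.exists_algebraMap_mem_of_one_le_valuation (Submodule.mul_mem_mul hq hb₁) ?_
  rw [mul_assoc, map_mul, ht]

end HeightOneSpectrum

theorem one_mem_div_mul {B X : Submodule R K} (hB : 1 ∈ B) (hX : 1 ∈ X) (hXB : X / B ≠ ⊥) :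
    (1 : K) ∈ X / B * B := by
  obtain ⟨q₀, hq₀, hq₀0⟩ := Submodule.exists_mem_ne_zero_of_ne_bot hXB
  have hne : X / B * B ≠ ⊥ :=
    (Submodule.ne_bot_iff _).mpr ⟨q₀ * 1, Submodule.mul_mem_mul hq₀ hB, by simpa using hq₀0⟩
  refine mem_of_forall_exists_algebraMap_mul_mem hne fun v => ?_
  simpa using v.exists_algebraMap_mem_div_mul hB hX hq₀ hq₀0

end IsDedekindDomain

theorem exists_linearMap_fractionRing_apply_eq_one {R M : Type*} [CommRing R] [IsDomain R]
    [AddCommGroup M] [Module R M] [Module.IsTorsionFree R M] {e : M} (he : e ≠ 0) :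
    ∃ β : M →ₗ[R] FractionRing R, β e = 1 := by
  let f := LocalizedModule.mkLinearMap (nonZeroDivisors R) M
  have hfe : f e ≠ 0 := by
    rw [Ne, IsLocalizedModule.eq_zero_iff (nonZeroDivisors R) f]
    rintro ⟨s, hs⟩
    exact he ((smul_eq_zero.mp hs).resolve_left (nonZeroDivisors.coe_ne_zero s))
  obtain ⟨φ, hφ⟩ := Module.Projective.exists_dual_eq_one (FractionRing R) hfe
  exact ⟨φ.restrictScalars R ∘ₗ f, hφ⟩

section

variable {R M N K : Type*} [CommRing R] [AddCommGroup M] [Module R M] [AddCommGroup N]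
  [Module R N] [CommRing K] [Algebra R K]

theorem LinearMap.apply_mul_apply_eq [IsDomain R] [Module.IsTorsionFree R K] {e : M}
    (he : ∀ x : M, ∃ r s : R, r ≠ 0 ∧ r • x = s • e) (u v : M →ₗ[R] K) (x : M) :
    u x * v e = v x * u e := by
  obtain ⟨r, s, hr, hx⟩ := he x
  have : r • (u x * v e - v x * u e) = 0 := by
    rw [smul_sub, ← smul_mul_assoc, ← smul_mul_assoc, ← map_smul, ← map_smul, hx, map_smul,
      map_smul, smul_mul_assoc, smul_mul_assoc, mul_comm (u e), sub_self]
  exact sub_eq_zero.mp ((smul_eq_zero.mp this).resolve_left hr)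

theorem LinearMap.injective_of_apply_ne_zero [IsDomain R] [Module.IsTorsionFree R M]
    [Module.IsTorsionFree R K]
    {e : M} (he : ∀ x : M, ∃ r s : R, r ≠ 0 ∧ r • x = s • e) {u : M →ₗ[R] K} (hu : u e ≠ 0) :
    Function.Injective u := by
  refine (injective_iff_map_eq_zero u).mpr fun x hx => ?_
  obtain ⟨r, s, hr, hrx⟩ := he x
  have hs : s = 0 := by
    have := congrArg u hrx
    rw [map_smul, map_smul, hx, smul_zero, eq_comm, smul_eq_zero] at this
    exact this.resolve_right hu
  rw [hs, zero_smul, smul_eq_zero] at hrx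
  exact hrx.resolve_left hr

theorem range_div_range_mul_le_map_iSup_range (β : M →ₗ[R] K) {ψ : N →ₗ[R] K}
    (hψ : Function.Injective ψ) :
    LinearMap.range ψ / LinearMap.range β * LinearMap.range β ≤
      (⨆ g : M →ₗ[R] N, LinearMap.range g).map ψ := by
  rw [Submodule.mul_le]
  rintro q hq _ ⟨b, rfl⟩
  have hq' : ∀ b, q * β b ∈ LinearMap.range ψ :=
    fun b => Submodule.mem_div_iff_forall_mul_mem.mp hq _ ⟨b, rfl⟩
  let g : M →ₗ[R] N := (LinearEquiv.ofInjective ψ hψ).symm ∘ₗ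
    ((LinearMap.mulLeft R q ∘ₗ β).codRestrict (LinearMap.range ψ) hq')
  refine ⟨g b, Submodule.mem_iSup_of_mem g ⟨b, rfl⟩, ?_⟩
  exact LinearEquiv.ofInjective_symm_apply (h := hψ) ψ ⟨q * β b, hq' b⟩

end

theorem exists_smul_eq_smul_of_rank_eq_one {R M : Type*} [CommRing R] [IsDomain R]
    [AddCommGroup M] [Module R M] [Module.IsTorsionFree R M] (h : Module.rank R M = 1) :
    ∃ e : M, e ≠ 0 ∧ ∀ x : M, ∃ r s : R, r ≠ 0 ∧ r • x = s • e := by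
  have : Nontrivial M := by
    rw [← rank_pos_iff_nontrivial (R := R), h]
    exact one_pos
  obtain ⟨e, he⟩ := exists_ne (0 : M)
  refine ⟨e, he, fun x => ?_⟩
  by_contra! hx
  have hind : LinearIndependent R ![e, x] := by
    refine LinearIndependent.pair_iff.mpr fun s t hst => ?_
    obtain rfl : t = 0 := by
      by_contra ht
      exact hx t (-s) ht (by rw [neg_smul, eq_neg_iff_add_eq_zero, add_comm, hst])
    rw [zero_smul, add_zero] at hst
    exact ⟨(smul_eq_zero.mp hst).resolve_right he, rfl⟩
  have := hind.cardinal_lift_le_rank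
  rw [Cardinal.mk_fin, h] at this
  norm_num at this

theorem mem_iSup_range_of_injective {R M N : Type*} [CommRing R] [IsDedekindDomain R]
    [AddCommGroup M] [Module R M] [Module.IsTorsionFree R M]
    [AddCommGroup N] [Module R N] [Module.IsTorsionFree R N]
    {e : M} (he0 : e ≠ 0) (he : ∀ x : M, ∃ r s : R, r ≠ 0 ∧ r • x = s • e)
    {k : N} (hk0 : k ≠ 0) (hk : ∀ x : N, ∃ r s : R, r ≠ 0 ∧ r • x = s • k)
    {f : M →ₗ[R] N} (hf : Function.Injective f) :
    k ∈ ⨆ g : M →ₗ[R] N, LinearMap.range g := by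
  obtain ⟨β, hβ⟩ := exists_linearMap_fractionRing_apply_eq_one (R := R) he0
  obtain ⟨ψ, hψ⟩ := exists_linearMap_fractionRing_apply_eq_one (R := R) hk0
  have hψinj : Function.Injective ψ := LinearMap.injective_of_apply_ne_zero hk (hψ ▸ one_ne_zero)
  have hq₀ : ψ (f e) ∈ LinearMap.range ψ / LinearMap.range β := by
    refine Submodule.mem_div_iff_forall_mul_mem.mpr ?_
    rintro _ ⟨b, rfl⟩
    refine ⟨f b, ?_⟩
    have := (ψ ∘ₗ f).apply_mul_apply_eq he β b
    rw [LinearMap.comp_apply, LinearMap.comp_apply, hβ, mul_one] at this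
    exact this.trans (mul_comm _ _)
  have hq₀0 : ψ (f e) ≠ 0 := by
    simpa using (hψinj.comp hf).ne he0
  have h1 := IsDedekindDomain.one_mem_div_mul (B := LinearMap.range β) (X := LinearMap.range ψ)
    ⟨e, hβ⟩ ⟨k, hψ⟩ ((Submodule.ne_bot_iff _).mpr ⟨_, hq₀, hq₀0⟩)
  obtain ⟨x, hx, hx1⟩ := range_div_range_mul_le_map_iSup_range β hψinj h1
  rwa [hψinj (hx1.trans hψ.symm)] at hx

theorem mem_pureGen_self (R : Type*) {A : Type*} [CommRing R] [IsDomain R] [AddCommGroup A]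
    [Module R A] (a : A) : a ∈ pureGen R a :=
  ⟨1, one_ne_zero, 1, rfl⟩

theorem exists_smul_eq_smul_self_pureGen (R : Type*) {A : Type*} [CommRing R] [IsDomain R]
    [AddCommGroup A] [Module R A] (a : A) (x : pureGen R a) :
    ∃ r s : R, r ≠ 0 ∧ r • x = s • ⟨a, mem_pureGen_self R a⟩ := by
  obtain ⟨r, hr, s, hx⟩ := x.2
  exact ⟨r, s, hr, Subtype.ext hx⟩

theorem IsPureSubmodule.pureGen_le {R A : Type*} [CommRing R] [IsDomain R] [AddCommGroup A]
    [Module R A] {K : Submodule R A} (hK : IsPureSubmodule R K) {a : A} (ha : a ∈ K) :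
    pureGen R a ≤ K := by
  rintro x ⟨r, hr, s, hx⟩
  exact hK r x hr (hx ▸ K.smul_mem s ha)

theorem modGenerated_of_iSup_range_eq_top {R : Type*} [CommRing R] {A : Type u} [AddCommGroup A]
    [Module R A] {K : Submodule R A} (h : ⨆ φ : A →ₗ[R] K, LinearMap.range φ = ⊤) :
    ModGenerated R K := by
  let S : Set K := ⋃ φ : A →ₗ[R] K, LinearMap.range φ
  have hS : ∀ y : S, ∃ φ : A →ₗ[R] K, ∃ a, φ a = y := fun y => by
    obtain ⟨φ, a, h⟩ := Set.mem_iUnion.mp y.2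
    exact ⟨φ, a, h⟩
  choose φ a hφa using hS
  refine ⟨S, Finsupp.lsum ℕ φ, ?_⟩
  rw [← LinearMap.range_eq_top, eq_top_iff, ← h, Submodule.iSup_eq_span]
  exact Submodule.span_le.mpr fun y hy => ⟨Finsupp.single ⟨y, hy⟩ (a ⟨y, hy⟩), by simp [hφa]⟩

theorem map_iSup_range_le_iSup_range {R A B X K : Type*} [CommRing R] [AddCommGroup A] [Module R A]
    [AddCommGroup B] [Module R B] [AddCommGroup X] [Module R X] [AddCommGroup K] [Module R K]
    {p : A →ₗ[R] B} (hp : Function.Surjective p) (i : X →ₗ[R] K) :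
    (⨆ g : B →ₗ[R] X, LinearMap.range g).map i ≤ ⨆ φ : A →ₗ[R] K, LinearMap.range φ := by
  rw [Submodule.map_iSup]
  refine iSup_le fun g => ?_
  rw [← LinearMap.range_comp, ← LinearMap.range_comp_of_range_eq_top (i ∘ₗ g)
    (LinearMap.range_eq_top.mpr hp)]
  exact le_iSup (fun φ : A →ₗ[R] K => LinearMap.range φ) _

theorem stmt6_general (R : Type*) [CommRing R] [IsDedekindDomain R]
    (A : Type u) [AddCommGroup A] [Module R A] [NoZeroSMulDivisors R A]
    (B C : Submodule R A) (hcompl : IsCompl B C) (hrkB : Module.rank R B = 1)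
    (hemb : ∀ a : A, a ≠ 0 → ∃ f : B →ₗ[R] (pureGen R a), Function.Injective f) :
    ∀ K : Submodule R A, IsPureSubmodule R K → ModGenerated R K := by
  intro K hK
  obtain ⟨b₀, hb₀, hB⟩ := exists_smul_eq_smul_of_rank_eq_one hrkB
  refine modGenerated_of_iSup_range_eq_top (eq_top_iff.mpr ?_)
  rintro ⟨a, ha⟩ -
  obtain rfl | ha0 := eq_or_ne a 0
  · exact zero_mem _
  obtain ⟨f, hf⟩ := hemb a ha0
  have hmem := mem_iSup_range_of_injective hb₀ hB (k := ⟨a, mem_pureGen_self R a⟩)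
    (by simpa using ha0) (exists_smul_eq_smul_self_pureGen R a) hf
  exact map_iSup_range_le_iSup_range (Submodule.projectionOnto_surjective hcompl)
    (Submodule.inclusion (hK.pureGen_le ha)) ⟨_, hmem, rfl⟩

/-- Let `A` be a finite rank torsion-free module over a Dedekind
domain with a direct decomposition `A = B ⊕ C` where `B` has rank `1` and there
is a monomorphism `B → ⟨a⟩_*` for every nonzero `a ∈ A`.  Then every pure
submodule `K` of `A` is `A`-generated. -/
theorem stmt6 (R : Type*) [CommRing R] [IsDomain R] [IsDedekindDomain R]
    (A : Type u) [AddCommGroup A] [Module R A] [NoZeroSMulDivisors R A]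
    (hfin : Module.rank R A < Cardinal.aleph0)
    (B C : Submodule R A) (hcompl : IsCompl B C) (hrkB : Module.rank R B = 1)
    (hemb : ∀ a : A, a ≠ 0 → ∃ f : B →ₗ[R] (pureGen R a), Function.Injective f) :
    ∀ K : Submodule R A, IsPureSubmodule R K → ModGenerated R K :=
  stmt6_general R A B C hcompl hrkB hemb
end

section
/- Let G = ⊕_{k∈ℤ} G_k be a direct sum of torsion-free abelian groups such that each G_k is homogeneous of type τ_k, where (τ_k)_{k∈ℤ} is a strictly increasing chain of types, and for each k there is a surjection G_{k-1} → X for every rank-1 group X of type τ_k. Then G is a self-pure-generator: every pure subgroup of G is G-generated. -/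
open TensorProduct

universe u

/-!
For `x ≠ 0` in a pure `K`, let `k` be the lowest index with `x k ≠ 0`. Realize `⟨x⟩_*` inside
`ℚ` as the group `coefGroup x` of rationals `q` for which `q x` exists in `G`; it is the
intersection of the corresponding groups of the components of `x`. Since `τ_k ≤ τ_j`, an
embedding `⟨x k⟩_* → ⟨x j⟩_*` is multiplication by a rational, so some `N ≠ 0` has
`N • coefGroup (x k) ≤ coefGroup x ≤ coefGroup (x k)`. A subgroup of `ℚ` squeezed like this is a
rational multiple of the larger one (peel off one prime factor of `N` at a time), so `⟨x⟩_*` has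
type `τ_k`. Hence `G (k - 1)` maps onto `⟨x⟩_*`, which lies in `K` by purity.
-/

section PureGen

variable {R A : Type*} [CommRing R] [IsDomain R] [AddCommGroup A] [Module R A]

theorem mem_pureGen_iff {a y : A} : y ∈ pureGen R a ↔ ∃ r : R, r ≠ 0 ∧ ∃ s : R, r • y = s • a :=
  Iff.rfl

theorem self_mem_pureGen (a : A) : a ∈ pureGen R a := ⟨1, one_ne_zero, 1, rfl⟩

theorem pureGen_le_of_isPureSubmodule {K : Submodule R A} (hK : IsPureSubmodule R K) {a : A}
    (ha : a ∈ K) : pureGen R a ≤ K := by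
  rintro y ⟨r, hr, s, h⟩
  exact hK r y hr (h ▸ K.smul_mem s ha)

theorem exists_mem_range_of_surjective_pureGen {B : Type*} [AddCommGroup B] [Module R B]
    {K : Submodule R A} (hK : IsPureSubmodule R K) (y : K) (f : B →ₗ[R] pureGen R (y : A))
    (hf : Function.Surjective f) : ∃ φ : B →ₗ[R] K, y ∈ LinearMap.range φ := by
  obtain ⟨b, hb⟩ := hf ⟨y, self_mem_pureGen _⟩
  exact ⟨(Submodule.inclusion (pureGen_le_of_isPureSubmodule hK y.2)).comp f, b,
    Subtype.ext (by simp [hb])⟩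

end PureGen

theorem modGenerated_of_forall_mem_range {R : Type*} {A : Type u} [CommRing R] [AddCommGroup A]
    [Module R A] {K : Submodule R A} (h : ∀ y : K, ∃ φ : A →ₗ[R] K, y ∈ LinearMap.range φ) :
    ModGenerated R K := by
  choose φ hφ using h
  refine ⟨K, Finsupp.lsum ℕ φ, fun y => ?_⟩
  obtain ⟨a, ha⟩ := hφ y
  exact ⟨Finsupp.single y a, by rw [Finsupp.lsum_single, ha]⟩

section RatSubgroup

open Pointwise

theorem exists_isCoprime_mul_eq (a : ℚ) {b : ℚ} (hb : b ≠ 0) :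
    ∃ m l : ℤ, m ≠ 0 ∧ IsCoprime m l ∧ m * a = l * b := by
  refine ⟨(a / b).den, (a / b).num, by exact_mod_cast (a / b).den_nz, ?_, ?_⟩
  · rw [Int.isCoprime_iff_gcd_eq_one, Int.gcd_comm]
    exact (a / b).reduced
  · have := (a / b).mul_den_eq_num
    field_simp at this
    push_cast
    linarith

theorem AddSubgroup.intCast_mul_mem {A : AddSubgroup ℚ} {a : ℚ} (ha : a ∈ A) (n : ℤ) :
    (n : ℚ) * a ∈ A := by
  simpa using A.zsmul_mem ha n

theorem AddSubgroup.natCast_mul_mem {A : AddSubgroup ℚ} {a : ℚ} (ha : a ∈ A) (n : ℕ) :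
    (n : ℚ) * a ∈ A := by
  simpa using A.nsmul_mem ha n

theorem AddSubgroup.exists_eq_mul_of_addMonoidHom (A : AddSubgroup ℚ) (f : A →+ ℚ) :
    ∃ c : ℚ, ∀ a : A, f a = c * a := by
  by_cases hA : ∀ a : A, a = 0
  · exact ⟨0, fun a => by simp [hA a]⟩
  push Not at hA
  obtain ⟨a₀, ha₀⟩ := hA
  have ha₀' : (a₀ : ℚ) ≠ 0 := by simpa using ha₀
  refine ⟨f a₀ / a₀, fun a => ?_⟩
  obtain ⟨m, l, hm, -, h⟩ := exists_isCoprime_mul_eq (a : ℚ) ha₀'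
  have hf : m * f a = l * f a₀ := by
    have : m • a = l • a₀ := Subtype.ext (by simpa using h)
    simpa using congrArg f this
  rw [div_mul_eq_mul_div, eq_div_iff ha₀']
  refine mul_left_cancel₀ (Int.cast_ne_zero.2 hm) ?_
  calc (m : ℚ) * (f a * a₀) = l * f a₀ * a₀ := by rw [← hf]; ring
    _ = f a₀ * (m * a) := by rw [h]; ring
    _ = m * (f a₀ * a) := by ring

theorem AddSubgroup.exists_natCast_mul_mem_of_injective {A B : AddSubgroup ℚ} (f : A →+ B)
    (hf : Function.Injective f) : ∃ n : ℕ, n ≠ 0 ∧ ∀ a ∈ A, (n : ℚ) * a ∈ B := by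
  obtain ⟨c, hc⟩ := A.exists_eq_mul_of_addMonoidHom (B.subtype.comp f)
  rcases eq_or_ne c 0 with rfl | hc₀
  · refine ⟨1, one_ne_zero, fun a ha => ?_⟩
    have : (⟨a, ha⟩ : A) = 0 := hf (Subtype.ext (by simpa using hc ⟨a, ha⟩))
    simp [show a = 0 from congrArg Subtype.val this]
  refine ⟨c.num.natAbs, by simpa using hc₀, fun a ha => ?_⟩
  have hca : c * a ∈ B := hc ⟨a, ha⟩ ▸ (f ⟨a, ha⟩).2
  have hnum : (c.num : ℚ) * a ∈ B := by
    convert B.natCast_mul_mem hca c.den using 1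
    rw [← c.mul_den_eq_num]
    ring
  rw [Nat.cast_natAbs]
  rcases abs_choice c.num with h | h <;> rw [h] <;> push_cast
  · exact hnum
  · simpa using B.neg_mem hnum

theorem AddSubgroup.eq_or_eq_smul_of_natCast_mul_mem {p : ℕ} (hp : p.Prime)
    {B C : AddSubgroup ℚ} (hBC : B ≤ C) (hCB : ∀ c ∈ C, (p : ℚ) * c ∈ B) :
    B = C ∨ B = (p : ℚ) • C := by
  have hpZ : Prime (p : ℤ) := Nat.prime_iff_prime_int.mp hp
  by_cases hB : B ≤ (p : ℚ) • C
  · refine Or.inr (le_antisymm hB fun x hx => ?_)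
    obtain ⟨c, hc, rfl⟩ := (AddSubgroup.mem_smul_pointwise_iff_exists _ _ _).1 hx
    exact hCB c hc
  left
  obtain ⟨b, hbB, hb⟩ := SetLike.not_le_iff_exists.1 hB
  have hb₀ : b ≠ 0 := by
    rintro rfl
    exact hb (zero_mem _)
  refine le_antisymm hBC fun a ha => ?_
  obtain ⟨m, l, hm, hml, h⟩ := exists_isCoprime_mul_eq a hb₀
  by_cases hpm : (p : ℤ) ∣ m
  · -- `b = u p b + v l b = u p b + v m a ∈ p C`, a contradiction
    obtain ⟨m', rfl⟩ := hpm
    have hpl : ¬ (p : ℤ) ∣ l := fun hpl =>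
      hpZ.not_isUnit (hml.isUnit_of_dvd' (dvd_mul_right _ _) hpl)
    obtain ⟨u, v, huv⟩ := (Prime.coprime_iff_not_dvd hpZ).2 hpl
    have huv' : (u : ℚ) * p + v * l = 1 := by exact_mod_cast huv
    refine absurd ((AddSubgroup.mem_smul_pointwise_iff_exists _ _ _).2
      ⟨u * b + (v * m' : ℤ) * a, C.add_mem (C.intCast_mul_mem (hBC hbB) u)
        (C.intCast_mul_mem ha _), ?_⟩) hb
    push_cast at h ⊢
    rw [smul_eq_mul]
    linear_combination b * huv' + v * h
  · obtain ⟨u, v, huv⟩ := (Prime.coprime_iff_not_dvd hpZ).2 hpm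
    have huv' : (u : ℚ) * p + v * m = 1 := by exact_mod_cast huv
    have hdecomp : a = p * (u * a) + (v * l : ℤ) * b := by
      push_cast
      linear_combination (-a) * huv' + v * h
    rw [hdecomp]
    exact B.add_mem (hCB _ (C.intCast_mul_mem ha u)) (B.intCast_mul_mem hbB _)

theorem AddSubgroup.exists_eq_smul_of_natCast_mul_mem {n : ℕ} (hn : n ≠ 0)
    {A B : AddSubgroup ℚ} (hBA : B ≤ A) (hAB : ∀ a ∈ A, (n : ℚ) * a ∈ B) :
    ∃ q : ℚ, q ≠ 0 ∧ B = q • A := by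
  induction n using induction_on_primes generalizing A B with
  | zero => exact absurd rfl hn
  | one => exact ⟨1, one_ne_zero, by
      rw [one_smul]
      exact le_antisymm hBA fun a ha => by simpa using hAB a ha⟩
  | prime_mul p n hp ih =>
    have hnA : (n : ℚ) • A ≤ A := by
      intro x hx
      obtain ⟨a, ha, rfl⟩ := (AddSubgroup.mem_smul_pointwise_iff_exists _ _ _).1 hx
      exact A.natCast_mul_mem ha n
    obtain ⟨q, hq, hC⟩ := ih (right_ne_zero_of_mul hn) (sup_le hBA hnA)
      fun a ha => AddSubgroup.mem_sup_right (AddSubgroup.smul_mem_pointwise_smul _ _ _ ha)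
    have hCB : ∀ c ∈ B ⊔ (n : ℚ) • A, (p : ℚ) * c ∈ B := by
      intro c hc
      obtain ⟨b, hb, _, hx, rfl⟩ := AddSubgroup.mem_sup.1 hc
      obtain ⟨a, ha, rfl⟩ := (AddSubgroup.mem_smul_pointwise_iff_exists _ _ _).1 hx
      rw [mul_add, smul_eq_mul, ← mul_assoc]
      exact B.add_mem (B.natCast_mul_mem hb p) (by simpa using hAB a ha)
    rcases AddSubgroup.eq_or_eq_smul_of_natCast_mul_mem hp le_sup_left hCB with h | h
    · exact ⟨q, hq, h.trans hC⟩
    · exact ⟨p * q, mul_ne_zero (by exact_mod_cast hp.ne_zero) hq, by rw [h, hC, smul_smul]⟩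

theorem AddSubgroup.nonempty_addEquiv_of_natCast_mul_mem {n : ℕ} (hn : n ≠ 0)
    {A B : AddSubgroup ℚ} (hBA : B ≤ A) (hAB : ∀ a ∈ A, (n : ℚ) * a ∈ B) :
    Nonempty (B ≃+ A) := by
  obtain ⟨q, hq, rfl⟩ := AddSubgroup.exists_eq_smul_of_natCast_mul_mem hn hBA hAB
  rw [AddSubgroup.pointwise_smul_def]
  exact ⟨(A.equivMapOfInjective _ (smul_right_injective ℚ hq)).symm⟩

theorem exists_common_natCast_mul_mem {ι : Type*} {A : AddSubgroup ℚ} {B : ι → AddSubgroup ℚ}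
    (s : Finset ι) (h : ∀ i ∈ s, ∃ n : ℕ, n ≠ 0 ∧ ∀ a ∈ A, (n : ℚ) * a ∈ B i) :
    ∃ N : ℕ, N ≠ 0 ∧ ∀ i ∈ s, ∀ a ∈ A, (N : ℚ) * a ∈ B i := by
  classical
  induction s using Finset.induction_on with
  | empty => exact ⟨1, one_ne_zero, by simp⟩
  | insert j s _ ih =>
    obtain ⟨N, hN, hNs⟩ := ih fun i hi => h i (Finset.mem_insert_of_mem hi)
    obtain ⟨n, hn, hnj⟩ := h j (Finset.mem_insert_self j s)
    refine ⟨n * N, mul_ne_zero hn hN, fun i hi a ha => ?_⟩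
    rcases Finset.mem_insert.1 hi with rfl | hi
    · simpa [mul_assoc] using hnj _ (A.natCast_mul_mem ha N)
    · simpa [mul_comm (n : ℚ), mul_assoc] using hNs i hi _ (A.natCast_mul_mem ha n)

end RatSubgroup

theorem smul_add_eq_of_smul_eq {R M : Type*} [CommRing R] [AddCommGroup M] [Module R M]
    {a y y' : M} {r r' s s' : R} (h : r • y = s • a) (h' : r' • y' = s' • a) :
    (r * r') • (y + y') = (s * r' + s' * r) • a := by
  calc (r * r') • (y + y') = r' • (r • y) + r • (r' • y') := by module
    _ = (s * r' + s' * r) • a := by rw [h, h']; module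

section CoefGroup

variable {M N : Type*} [AddCommGroup M] [AddCommGroup N]

def coefGroup (a : M) : AddSubgroup ℚ where
  carrier := {q | ∃ r s : ℤ, r ≠ 0 ∧ q * r = s ∧ ∃ y : M, r • y = s • a}
  zero_mem' := ⟨1, 0, one_ne_zero, by simp, 0, by simp⟩
  add_mem' := by
    rintro q q' ⟨r, s, hr, hq, y, hy⟩ ⟨r', s', hr', hq', y', hy'⟩
    refine ⟨r * r', s * r' + s' * r, mul_ne_zero hr hr', ?_, y + y', smul_add_eq_of_smul_eq hy hy'⟩
    push_cast
    rw [← hq, ← hq']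
    ring
  neg_mem' := by
    rintro q ⟨r, s, hr, hq, y, hy⟩
    exact ⟨r, -s, hr, by push_cast; rw [← hq]; ring, -y, by rw [smul_neg, hy, neg_smul]⟩

theorem coefGroup_le_map (φ : M →+ N) (a : M) : coefGroup a ≤ coefGroup (φ a) := by
  rintro q ⟨r, s, hr, hq, y, hy⟩
  exact ⟨r, s, hr, hq, φ y, by rw [← map_zsmul, hy, map_zsmul]⟩

theorem coefGroup_zero : coefGroup (0 : M) = ⊤ :=
  eq_top_iff.2 fun q _ => ⟨q.den, q.num, by exact_mod_cast q.den_nz, q.mul_den_eq_num, 0, by simp⟩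

noncomputable def pureGenCoef (a : M) (y : pureGen ℤ a) : ℚ :=
  ((mem_pureGen_iff.1 y.2).choose_spec.2.choose : ℚ) / (mem_pureGen_iff.1 y.2).choose

variable [Module.IsTorsionFree ℤ M] [Module.IsTorsionFree ℤ N]

theorem mem_coefGroup_iff {a : M} {q : ℚ} :
    q ∈ coefGroup a ↔ ∃ y : M, (q.den : ℤ) • y = q.num • a := by
  refine ⟨?_, fun ⟨y, hy⟩ => ⟨q.den, q.num, by exact_mod_cast q.den_nz, q.mul_den_eq_num, y, hy⟩⟩
  rintro ⟨r, s, hr, hq, y, hy⟩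
  have hrs : (q.den : ℤ) * s = r * q.num := by
    have : (q.den : ℚ) * s = r * q.num := by rw [← hq, ← q.mul_den_eq_num]; ring
    exact_mod_cast this
  refine ⟨y, smul_right_injective M hr ?_⟩
  change r • (q.den : ℤ) • y = r • q.num • a
  rw [smul_comm, hy, smul_smul, smul_smul, hrs]

theorem coefGroup_dfinsupp {ι : Type*} {G : ι → Type*} [∀ i, AddCommGroup (G i)]
    [∀ i, Module.IsTorsionFree ℤ (G i)] (x : Π₀ i, G i) : coefGroup x = ⨅ i, coefGroup (x i) := by
  classical
  refine le_antisymm (le_iInf fun i => coefGroup_le_map (DFinsupp.evalAddMonoidHom i) x)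
    fun q hq => ?_
  choose y hy using fun i => mem_coefGroup_iff.1 (AddSubgroup.mem_iInf.1 hq i)
  refine mem_coefGroup_iff.2 ⟨DFinsupp.mk x.support fun i => y i, DFinsupp.ext fun i => ?_⟩
  by_cases hi : i ∈ x.support
  · simpa [DFinsupp.mk_apply, hi] using hy i
  · simp [DFinsupp.mk_apply, hi, DFinsupp.notMem_support_iff.1 hi]

theorem pureGenCoef_eq {a : M} (ha : a ≠ 0) (y : pureGen ℤ a) {r s : ℤ} (hr : r ≠ 0)
    (h : r • (y : M) = s • a) : pureGenCoef a y = s / r := by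
  have hy := mem_pureGen_iff.1 y.2
  obtain ⟨hr₀, h₀⟩ := hy.choose_spec
  have hrs : hy.choose * s = r * h₀.choose := smul_left_injective ℤ ha <| by
    simp only [mul_smul, ← h, ← h₀.choose_spec, smul_comm r]
  rw [pureGenCoef, div_eq_div_iff (by exact_mod_cast hr₀) (by exact_mod_cast hr)]
  exact_mod_cast (by linear_combination -hrs : h₀.choose * r = s * hy.choose)

noncomputable def pureGenCoefHom {a : M} (ha : a ≠ 0) : pureGen ℤ a →+ ℚ where
  toFun := pureGenCoef a
  map_zero' := by simpa using pureGenCoef_eq ha 0 one_ne_zero (s := 0) (by simp)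
  map_add' y y' := by
    obtain ⟨r, hr, s, h⟩ := y.2
    obtain ⟨r', hr', s', h'⟩ := y'.2
    rw [pureGenCoef_eq ha y hr h, pureGenCoef_eq ha y' hr' h',
      pureGenCoef_eq ha (y + y') (mul_ne_zero hr hr') (smul_add_eq_of_smul_eq h h')]
    push_cast
    field_simp

theorem pureGenCoefHom_injective {a : M} (ha : a ≠ 0) : Function.Injective (pureGenCoefHom ha) := by
  refine (injective_iff_map_eq_zero _).2 fun y hy => ?_
  obtain ⟨r, hr, s, h⟩ := y.2
  have hs : s = 0 := by
    simpa [pureGenCoefHom, pureGenCoef_eq ha y hr h, hr] using hy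
  rw [hs, zero_smul, smul_eq_zero_iff_right hr] at h
  exact Subtype.ext h

theorem range_pureGenCoefHom {a : M} (ha : a ≠ 0) : (pureGenCoefHom ha).range = coefGroup a := by
  ext q
  constructor
  · rintro ⟨y, rfl⟩
    obtain ⟨r, hr, s, h⟩ := y.2
    refine ⟨r, s, hr, ?_, y, h⟩
    simp only [pureGenCoefHom, AddMonoidHom.coe_mk, ZeroHom.coe_mk, pureGenCoef_eq ha y hr h]
    field_simp
  · rintro ⟨r, s, hr, hq, y, hy⟩
    refine ⟨⟨y, r, hr, s, hy⟩, ?_⟩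
    simp only [pureGenCoefHom, AddMonoidHom.coe_mk, ZeroHom.coe_mk,
      pureGenCoef_eq ha ⟨y, r, hr, s, hy⟩ hr hy, ← hq]
    field_simp

noncomputable def pureGenEquivCoefGroup {a : M} (ha : a ≠ 0) : pureGen ℤ a ≃+ coefGroup a :=
  (AddMonoidHom.ofInjective (pureGenCoefHom_injective ha)).trans
    (AddEquiv.addSubgroupCongr (range_pureGenCoefHom ha))

theorem exists_natCast_mul_mem_coefGroup_of_injective {a : M} {b : N} (ha : a ≠ 0) (hb : b ≠ 0)
    (f : pureGen ℤ a →+ pureGen ℤ b) (hf : Function.Injective f) :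
    ∃ n : ℕ, n ≠ 0 ∧ ∀ q ∈ coefGroup a, (n : ℚ) * q ∈ coefGroup b :=
  let ea := pureGenEquivCoefGroup ha
  let eb := pureGenEquivCoefGroup hb
  AddSubgroup.exists_natCast_mul_mem_of_injective
    ((eb.toAddMonoidHom.comp f).comp ea.symm.toAddMonoidHom)
    (eb.injective.comp (hf.comp ea.symm.injective))

theorem exists_natCast_mul_mem_coefGroup_dfinsupp {ι : Type*} {G : ι → Type*}
    [∀ i, AddCommGroup (G i)] [∀ i, Module.IsTorsionFree ℤ (G i)] (x : Π₀ i, G i)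
    {A : AddSubgroup ℚ}
    (h : ∀ i, x i ≠ 0 → ∃ n : ℕ, n ≠ 0 ∧ ∀ q ∈ A, (n : ℚ) * q ∈ coefGroup (x i)) :
    ∃ N : ℕ, N ≠ 0 ∧ ∀ q ∈ A, (N : ℚ) * q ∈ coefGroup x := by
  classical
  obtain ⟨N, hN, hNx⟩ :=
    exists_common_natCast_mul_mem x.support fun i hi => h i (DFinsupp.mem_support_iff.1 hi)
  refine ⟨N, hN, fun q hq => ?_⟩
  rw [coefGroup_dfinsupp, AddSubgroup.mem_iInf]
  intro i
  by_cases hi : i ∈ x.support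
  · exact hNx i hi q hq
  · rw [DFinsupp.notMem_support_iff.1 hi, coefGroup_zero]
    exact AddSubgroup.mem_top _

end CoefGroup

theorem exists_injective_of_le {X : ℤ → Type*} [∀ k, AddGroup (X k)]
    (h : ∀ k, ∃ f : X k →+ X (k + 1), Function.Injective f) {k j : ℤ} (hkj : k ≤ j) :
    ∃ f : X k →+ X j, Function.Injective f := by
  induction j, hkj using Int.leInduction with
  | base => exact ⟨AddMonoidHom.id _, Function.injective_id⟩
  | succ j _ ih =>
    obtain ⟨f, hf⟩ := ih
    obtain ⟨g, hg⟩ := h j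
    exact ⟨g.comp f, hg.comp hf⟩

theorem exists_nonempty_pureGen_addEquiv {G : ℤ → Type*} [∀ k, AddCommGroup (G k)]
    [∀ k, Module.IsTorsionFree ℤ (G k)] {T : ℤ → AddSubgroup ℚ}
    (hchain : ∀ k, ∃ f : T k →+ T (k + 1), Function.Injective f)
    (hhomog : ∀ k, ∀ g : G k, g ≠ 0 → Nonempty ((pureGen ℤ g) ≃+ T k))
    {x : Π₀ k, G k} (hx : x ≠ 0) : ∃ k, Nonempty (pureGen ℤ x ≃+ T k) := by
  classical
  have hsupp : x.support.Nonempty := by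
    rwa [Finset.nonempty_iff_ne_empty, Ne, DFinsupp.support_eq_empty]
  set k := x.support.min' hsupp
  have hk : x k ≠ 0 := DFinsupp.mem_support_iff.1 (x.support.min'_mem hsupp)
  obtain ⟨eₖ⟩ := hhomog k (x k) hk
  obtain ⟨N, hN, hNx⟩ := exists_natCast_mul_mem_coefGroup_dfinsupp x
    (A := coefGroup (x k)) fun j hj => by
      obtain ⟨c, hc⟩ := exists_injective_of_le (X := fun k => T k) hchain
        (x.support.min'_le j (DFinsupp.mem_support_iff.2 hj))
      obtain ⟨eⱼ⟩ := hhomog j (x j) hj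
      exact exists_natCast_mul_mem_coefGroup_of_injective hk hj
        ((eⱼ.symm.toAddMonoidHom.comp c).comp eₖ.toAddMonoidHom)
        (eⱼ.symm.injective.comp (hc.comp eₖ.injective))
  obtain ⟨e⟩ := AddSubgroup.nonempty_addEquiv_of_natCast_mul_mem hN
    (coefGroup_le_map (DFinsupp.evalAddMonoidHom k) x) hNx
  exact ⟨k, ⟨(pureGenEquivCoefGroup hx).trans (e.trans ((pureGenEquivCoefGroup hk).symm.trans eₖ))⟩⟩

theorem stmt15_general (G : ℤ → Type u) [∀ k, AddCommGroup (G k)]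
    [∀ k, NoZeroSMulDivisors ℤ (G k)]
    (T : ℤ → AddSubgroup ℚ)
    (hchain : ∀ k, ∃ f : T k →+ T (k + 1), Function.Injective f)
    (hhomog : ∀ k, ∀ g : G k, g ≠ 0 → Nonempty ((pureGen ℤ g) ≃+ T k))
    (hsurj : ∀ (k : ℤ) (X : Type u) [AddCommGroup X], Nonempty (X ≃+ T k) →
      ∃ f : G (k - 1) →+ X, Function.Surjective f) :
    SelfPureGenerator ℤ (Π₀ k, G k) := by
  intro K hK
  refine modGenerated_of_forall_mem_range fun y => ?_
  by_cases hy : (y : Π₀ k, G k) = 0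
  · exact ⟨0, 0, Subtype.ext hy.symm⟩
  obtain ⟨k, hk⟩ := exists_nonempty_pureGen_addEquiv hchain hhomog hy
  obtain ⟨f, hf⟩ := hsurj k _ hk
  exact exists_mem_range_of_surjective_pureGen hK y
    (f.comp (DFinsupp.evalAddMonoidHom (k - 1))).toIntLinearMap
    (hf.comp fun g => ⟨DFinsupp.single (k - 1) g, DFinsupp.single_eq_same⟩)

/-- Let `G = ⊕_{k ∈ ℤ} G k` where each `G k` is torsion-free
and homogeneous of type `τ_k` (encoded by rank-1 subgroups `T k ≤ ℚ`: the pure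
subgroup of every nonzero element of `G k` is isomorphic to `T k`), the types
`τ_k` form a strictly increasing chain, and for each `k` every rank-1 group of
type `τ_k` is a surjective image of `G (k-1)`.  Then `G` is a
self-pure-generator. -/
theorem stmt15 (G : ℤ → Type u) [∀ k, AddCommGroup (G k)]
    [∀ k, NoZeroSMulDivisors ℤ (G k)]
    (T : ℤ → AddSubgroup ℚ) (hT0 : ∀ k, T k ≠ ⊥)
    (hchain : ∀ k, ∃ f : T k →+ T (k + 1), Function.Injective f)
    (hstrict : ∀ k, ¬ ∃ f : T (k + 1) →+ T k, Function.Injective f)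
    (hhomog : ∀ k, ∀ g : G k, g ≠ 0 → Nonempty ((pureGen ℤ g) ≃+ T k))
    (hsurj : ∀ (k : ℤ) (X : Type u) [AddCommGroup X], Nonempty (X ≃+ T k) →
      ∃ f : G (k - 1) →+ X, Function.Surjective f) :
    SelfPureGenerator ℤ (Π₀ k, G k) :=
  stmt15_general G T hchain hhomog hsurj
end
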